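/- arXiv:2511.07694 — 4 statements merged into one kernel-verified Lean document; each statement's English description precedes it below -/
import Mathlib

section
/- Let p : ℕ → ℝ be a probability mass function (p i ≥ 0, ∑ i, p i = 1) whose values are sorted in nonincreasing order, i.e., p i ≥ p j whenever i ≤ j. Fix K ≥ 1 with p K > 0 (indices 1..K are the top-K values). Then the Shannon entropy H = -∑ i, p i * log (p i) satisfies H ≥ -log (p K) - ∑_{i=1}^{K} p i * log (p i / p K). -/
/-!
Write `p i log p i = p i log (p i / p K) + p i log (p K)`. Summing, the second part contributes
exactly `log (p K)` because `p` sums to one, while in the first part every term with `i > K`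
is nonpositive since there `p i ≤ p K`; dropping those terms leaves the top-`K` sum.
-/

open Finset Real

lemma mul_log_eq_mul_log_div_add {x c : ℝ} (hc : c ≠ 0) :
    x * log x = x * log (x / c) + x * log c := by
  rcases eq_or_ne x 0 with rfl | hx
  · simp
  · rw [log_div hx hc]
    ring

lemma mul_log_div_nonpos {x c : ℝ} (hx : 0 ≤ x) (hxc : x ≤ c) : x * log (x / c) ≤ 0 :=
  mul_nonpos_of_nonneg_of_nonpos hx <|
    log_nonpos (div_nonneg hx (hx.trans hxc)) (div_le_one_of_le₀ hxc (hx.trans hxc))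

lemma tsum_mul_log_le {ι : Type*} {q : ι → ℝ} {c : ℝ} (s : Finset ι) (hc : c ≠ 0)
    (hq : Summable q) (hqlog : Summable fun i => q i * log (q i))
    (hbound : ∀ i ∉ s, 0 ≤ q i ∧ q i ≤ c) :
    ∑' i, q i * log (q i) ≤ (∑' i, q i) * log c + ∑ i ∈ s, q i * log (q i / c) := by
  have hsplit : ∀ i, q i * log (q i) = q i * log (q i / c) + q i * log c := fun i =>
    mul_log_eq_mul_log_div_add hc
  have hdiv : Summable fun i => q i * log (q i / c) := by
    simpa only [hsplit, add_sub_cancel_right] using hqlog.sub (hq.mul_right (log c))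
  have htail : ∑' i, q i * log (q i / c) ≤ ∑ i ∈ s, q i * log (q i / c) := by
    simpa only [tsum_neg, sum_neg_distrib, neg_le_neg_iff] using
      hdiv.neg.sum_le_tsum s fun i hi =>
        neg_nonneg.mpr (mul_log_div_nonpos (hbound i hi).1 (hbound i hi).2)
  calc ∑' i, q i * log (q i)
      = ∑' i, q i * log (q i / c) + (∑' i, q i) * log c := by
        simp only [hsplit]
        rw [hdiv.tsum_add (hq.mul_right _), tsum_mul_right]
    _ ≤ (∑' i, q i) * log c + ∑ i ∈ s, q i * log (q i / c) := by linarith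

lemma sum_range_add_one_eq_sum_Icc {M : Type*} [AddCommMonoid M] (f : ℕ → M) (n : ℕ) :
    ∑ i ∈ range n, f (i + 1) = ∑ i ∈ Icc 1 n, f i := by
  rw [← Ico_add_one_right_eq_Icc, sum_Ico_eq_sum_range]
  simp only [Nat.add_sub_cancel, add_comm]

/-- Proposition 1 (PRO lower bound on predictive entropy): for a pmf `p`
(1-indexed, nonincreasing), the Shannon entropy is bounded below by the
PRO score computed from the top-`K` probabilities. -/
theorem entropy_ge_PRO (p : ℕ → ℝ) (K : ℕ)
    (hnn : ∀ i, 0 ≤ p i)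
    (hs : Summable (fun i => p (i + 1)))
    (hsum : ∑' i, p (i + 1) = 1)
    (hsort : ∀ i j, 1 ≤ i → i ≤ j → p j ≤ p i)
    (hK : 1 ≤ K) (hpK : 0 < p K)
    (hHs : Summable (fun i => p (i + 1) * Real.log (p (i + 1)))) :
    -∑' i, p (i + 1) * Real.log (p (i + 1)) ≥
      -Real.log (p K) - ∑ i ∈ Finset.Icc 1 K, p i * Real.log (p i / p K) := by
  have hbound : ∀ i ∉ range K, 0 ≤ p (i + 1) ∧ p (i + 1) ≤ p K := fun i hi =>
    ⟨hnn _, hsort K (i + 1) hK (by simp only [mem_range, not_lt] at hi; omega)⟩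
  have key := tsum_mul_log_le (range K) hpK.ne' hs hHs hbound
  rw [hsum, one_mul, sum_range_add_one_eq_sum_Icc (fun i => p i * log (p i / p K))] at key
  linarith
end

section
/- Let p be a probability mass function sorted nonincreasingly with p (K+1) > 0 for some K ≥ 1. Then H(p) - PRO_K = ∑_{i>K} p i * (log (p K) - log (p i)), and each summand is nonnegative. -/
/-- The gap in Proposition 1: H(p) - PRO_K equals the tail sum
∑_{i>K} p i * (log (p K) - log (p i)), and each summand is nonnegative. -/
theorem entropy_sub_PRO_eq_tail (p : ℕ → ℝ) (K : ℕ)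
    (hnn : ∀ i, 0 ≤ p i)
    (hs : Summable (fun i => p (i + 1)))
    (hsum : ∑' i, p (i + 1) = 1)
    (hsort : ∀ i j, 1 ≤ i → i ≤ j → p j ≤ p i)
    (hK : 1 ≤ K) (hpK1 : 0 < p (K + 1))
    (hHs : Summable (fun i => p (i + 1) * Real.log (p (i + 1)))) :
    ((-∑' i, p (i + 1) * Real.log (p (i + 1))) -
        (-Real.log (p K) - ∑ i ∈ Finset.Icc 1 K, p i * Real.log (p i / p K)) =
      ∑' j : ℕ, p (K + 1 + j) * (Real.log (p K) - Real.log (p (K + 1 + j)))) ∧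
    (∀ j : ℕ, 0 ≤ p (K + 1 + j) * (Real.log (p K) - Real.log (p (K + 1 + j)))) := by
  have hpK : 0 < p K := lt_of_lt_of_le hpK1 (hsort K (K+1) hK (Nat.le_succ K))
  have hppos : ∀ i ∈ Finset.Icc 1 K, 0 < p i := by
    intro i hi
    rw [Finset.mem_Icc] at hi
    exact lt_of_lt_of_le hpK (hsort i K hi.1 hi.2)
  -- tail summabilities
  have hs2 : Summable (fun j => p (K + 1 + j)) := by
    refine ((summable_nat_add_iff K).2 hs).congr ?_
    intro n; congr 1; omega
  have hHs2 : Summable (fun j => p (K + 1 + j) * Real.log (p (K + 1 + j))) := by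
    refine ((summable_nat_add_iff K).2 hHs).congr ?_
    intro n
    have h : n + K + 1 = K + 1 + n := by omega
    rw [h]
  -- split the full sums
  have hsplitP : (∑ i ∈ Finset.range K, p (i + 1)) + ∑' j, p (K + 1 + j) = 1 := by
    rw [← hsum, ← Summable.sum_add_tsum_nat_add K hs]
    congr 1
    exact tsum_congr (fun n => by rw [show n + K + 1 = K + 1 + n by omega])
  have hsplitH : (∑ i ∈ Finset.range K, p (i + 1) * Real.log (p (i + 1)))
      + ∑' j, p (K + 1 + j) * Real.log (p (K + 1 + j))
      = ∑' i, p (i + 1) * Real.log (p (i + 1)) := by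
    rw [← Summable.sum_add_tsum_nat_add K hHs]
    congr 1
    exact tsum_congr (fun n => by rw [show n + K + 1 = K + 1 + n by omega])
  -- convert range sums to Icc sums
  have hIccP : ∑ i ∈ Finset.Icc 1 K, p i = ∑ i ∈ Finset.range K, p (i + 1) := by
    rw [← Finset.Ico_add_one_right_eq_Icc, Finset.sum_Ico_eq_sum_range]
    exact Finset.sum_congr rfl (fun i _ => by rw [show 1 + i = i + 1 by omega])
  have hIccH : ∑ i ∈ Finset.Icc 1 K, p i * Real.log (p i)
      = ∑ i ∈ Finset.range K, p (i + 1) * Real.log (p (i + 1)) := by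
    rw [← Finset.Ico_add_one_right_eq_Icc, Finset.sum_Ico_eq_sum_range]
    exact Finset.sum_congr rfl (fun i _ => by rw [show 1 + i = i + 1 by omega])
  -- expand the PRO sum
  have hPRO : ∑ i ∈ Finset.Icc 1 K, p i * Real.log (p i / p K)
      = (∑ i ∈ Finset.Icc 1 K, p i * Real.log (p i))
        - (∑ i ∈ Finset.Icc 1 K, p i) * Real.log (p K) := by
    rw [Finset.sum_mul, ← Finset.sum_sub_distrib]
    refine Finset.sum_congr rfl (fun i hi => ?_)
    rw [Real.log_div (hppos i hi).ne' hpK.ne']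
    ring
  -- compute the RHS
  have hRHS : ∑' j : ℕ, p (K + 1 + j) * (Real.log (p K) - Real.log (p (K + 1 + j)))
      = (∑' j, p (K + 1 + j)) * Real.log (p K)
        - ∑' j, p (K + 1 + j) * Real.log (p (K + 1 + j)) := by
    rw [← tsum_mul_right, ← Summable.tsum_sub (hs2.mul_right _) hHs2]
    exact tsum_congr (fun j => by ring)
  constructor
  · have h5 : (∑' j, p (K + 1 + j)) * Real.log (p K)
        = Real.log (p K) - (∑ i ∈ Finset.range K, p (i + 1)) * Real.log (p K) := by
      rw [show (∑' j, p (K + 1 + j)) = 1 - ∑ i ∈ Finset.range K, p (i + 1) by linarith]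
      ring
    rw [hRHS, hPRO, hIccP, hIccH, ← hsplitH, h5]
    ring
  · intro j
    rcases eq_or_lt_of_le (hnn (K + 1 + j)) with h | h
    · rw [← h]; ring_nf; simp
    · have hle : p (K + 1 + j) ≤ p K := hsort K (K + 1 + j) hK (by omega)
      have := Real.log_le_log (by exact h) hle
      nlinarith
end

section
/- Let p be a probability mass function sorted nonincreasingly with p (K+1) > 0. Then PRO_{K+1} ≥ PRO_K: the PRO lower bound is monotone nondecreasing in K. -/
/-!
Write `S = ∑_{i ≤ K} p i`. Since `p i * log (p i / c) = p i * log (p i) - p i * log c`, the bound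
`-log c - ∑_{i ≤ K} p i * log (p i / c)` is affine in `log c` with slope `S - 1`, and the extra term
of `PRO_{K+1}` vanishes because its quotient is `1`. Hence
`PRO_{K+1} - PRO_K = (1 - S) (log p K - log p (K+1))`, a product of two nonnegative factors.
-/

open Finset Real

noncomputable def proBound (p : ℕ → ℝ) (K : ℕ) : ℝ :=
  -log (p K) - ∑ i ∈ Icc 1 K, p i * log (p i / p K)

lemma mul_log_div_eq {x c : ℝ} (hc : c ≠ 0) : x * log (x / c) = x * log x - x * log c := by
  rcases eq_or_ne x 0 with rfl | hx
  · simp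
  · rw [log_div hx hc, mul_sub]

lemma sum_mul_log_div_eq {ι : Type*} (s : Finset ι) (f : ι → ℝ) {c : ℝ} (hc : c ≠ 0) :
    ∑ i ∈ s, f i * log (f i / c) = ∑ i ∈ s, f i * log (f i) - (∑ i ∈ s, f i) * log c := by
  rw [sum_mul, ← sum_sub_distrib]
  exact sum_congr rfl fun i _ => mul_log_div_eq hc

lemma proBound_eq (p : ℕ → ℝ) {K : ℕ} (hK : p K ≠ 0) :
    proBound p K = -∑ i ∈ Icc 1 K, p i * log (p i) - (1 - ∑ i ∈ Icc 1 K, p i) * log (p K) := by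
  rw [proBound, sum_mul_log_div_eq _ _ hK]
  ring

lemma proBound_succ_eq (p : ℕ → ℝ) {K : ℕ} (hK : p (K + 1) ≠ 0) :
    proBound p (K + 1) =
      -∑ i ∈ Icc 1 K, p i * log (p i) - (1 - ∑ i ∈ Icc 1 K, p i) * log (p (K + 1)) := by
  rw [proBound, sum_Icc_succ_top (by omega), div_self hK, log_one, mul_zero, add_zero,
    sum_mul_log_div_eq _ _ hK]
  ring

lemma proBound_succ_sub (p : ℕ → ℝ) {K : ℕ} (hK : p K ≠ 0) (hK1 : p (K + 1) ≠ 0) :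
    proBound p (K + 1) - proBound p K =
      (1 - ∑ i ∈ Icc 1 K, p i) * (log (p K) - log (p (K + 1))) := by
  rw [proBound_succ_eq p hK1, proBound_eq p hK]
  ring

lemma proBound_le_succ (p : ℕ → ℝ) {K : ℕ} (hK1 : 0 < p (K + 1)) (hle : p (K + 1) ≤ p K)
    (hS : ∑ i ∈ Icc 1 K, p i ≤ 1) :
    proBound p K ≤ proBound p (K + 1) := by
  rw [← sub_nonneg, proBound_succ_sub p (hK1.trans_le hle).ne' hK1.ne']
  exact mul_nonneg (sub_nonneg.2 hS) (sub_nonneg.2 (log_le_log hK1 hle))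

lemma sum_Icc_one_le_tsum_succ {f : ℕ → ℝ} (hnn : ∀ i, 0 ≤ f (i + 1))
    (hs : Summable fun i => f (i + 1)) (K : ℕ) :
    ∑ i ∈ Icc 1 K, f i ≤ ∑' i, f (i + 1) :=
  calc ∑ i ∈ Icc 1 K, f i = ∑ i ∈ range K, f (i + 1) := by
        rw [← Ico_add_one_right_eq_Icc, sum_Ico_eq_sum_range]
        simp [add_comm]
    _ ≤ ∑' i, f (i + 1) := hs.sum_le_tsum _ fun i _ => hnn i

/-- Monotonicity: the PRO lower bound is nondecreasing in K. -/
theorem PRO_mono (p : ℕ → ℝ) (K : ℕ)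
    (hnn : ∀ i, 0 ≤ p i)
    (hs : Summable (fun i => p (i + 1)))
    (hsum : ∑' i, p (i + 1) = 1)
    (hsort : ∀ i j, 1 ≤ i → i ≤ j → p j ≤ p i)
    (hK : 1 ≤ K) (hpK1 : 0 < p (K + 1)) :
    -Real.log (p (K + 1)) -
        ∑ i ∈ Finset.Icc 1 (K + 1), p i * Real.log (p i / p (K + 1)) ≥
      -Real.log (p K) - ∑ i ∈ Finset.Icc 1 K, p i * Real.log (p i / p K) := by
  have hS : ∑ i ∈ Icc 1 K, p i ≤ 1 :=
    hsum ▸ sum_Icc_one_le_tsum_succ (fun i => hnn (i + 1)) hs K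
  exact proBound_le_succ p hpK1 (hsort K (K + 1) hK K.le_succ) hS
end

section
/- Let p be a probability mass function sorted nonincreasingly with p 1 > 0. For every K with p K > 0, the PRO score satisfies -log (p 1) ≤ PRO_K ≤ H(p): the PRO score interpolates between the NLL of the top generation and the full predictive entropy. -/
/-!
With `S = ∑_{i ≤ K} p i`, the PRO score is `-∑_{i ≤ K} p i log p i - (1 - S) log p K`: the mass
outside the top `K` is charged `-log p K`. Every `p i` is at most `p 1`, so every charge is at
least `-log p 1`, which is the lower bound. Every tail entry is at most `p K`, so the tail's
actual contribution `-∑_{i > K} p i log p i` to the entropy is at least `-(1 - S) log p K`,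
which is the upper bound.
-/

open Finset Real

lemma Finset.sum_Icc_one_eq_sum_range {M : Type*} [AddCommMonoid M] (f : ℕ → M) (K : ℕ) :
    ∑ i ∈ Icc 1 K, f i = ∑ i ∈ range K, f (i + 1) := by
  rw [range_eq_Ico, sum_Ico_add' f 0 K 1, zero_add, Ico_add_one_right_eq_Icc]

namespace Real

lemma mul_log_le_mul_log_of_le {x y : ℝ} (hx : 0 ≤ x) (hxy : x ≤ y) :
    x * log x ≤ x * log y := by
  rcases hx.eq_or_lt with rfl | hx
  · simp
  · exact mul_le_mul_of_nonneg_left (log_le_log hx hxy) hx.le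

lemma mul_log_div (x : ℝ) {c : ℝ} (hc : c ≠ 0) :
    x * log (x / c) = x * log x - x * log c := by
  rcases eq_or_ne x 0 with rfl | hx
  · simp
  · rw [log_div hx hc]; ring

lemma sum_mul_log_le {ι : Type*} {s : Finset ι} {q : ι → ℝ} {M : ℝ}
    (hnn : ∀ i ∈ s, 0 ≤ q i) (hle : ∀ i ∈ s, q i ≤ M) :
    ∑ i ∈ s, q i * log (q i) ≤ (∑ i ∈ s, q i) * log M := by
  rw [sum_mul]
  exact sum_le_sum fun i hi => mul_log_le_mul_log_of_le (hnn i hi) (hle i hi)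

lemma tsum_mul_log_le {ι : Type*} {q : ι → ℝ} {M : ℝ} (hnn : ∀ i, 0 ≤ q i) (hle : ∀ i, q i ≤ M)
    (hq : Summable q) (hql : Summable fun i => q i * log (q i)) :
    ∑' i, q i * log (q i) ≤ (∑' i, q i) * log M := by
  rw [← tsum_mul_right]
  exact hql.tsum_le_tsum (fun i => mul_log_le_mul_log_of_le (hnn i) (hle i)) (hq.mul_right _)

end Real

/-- Distributions are indexed from `1`: `p 1 ≥ p 2 ≥ ⋯`. -/
noncomputable def proScore (p : ℕ → ℝ) (K : ℕ) : ℝ :=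
  -log (p K) - ∑ i ∈ Icc 1 K, p i * log (p i / p K)

noncomputable def entropy (p : ℕ → ℝ) : ℝ :=
  -∑' i, p (i + 1) * log (p (i + 1))

section

variable {p : ℕ → ℝ} {K : ℕ}

lemma proScore_eq (hpK : p K ≠ 0) :
    proScore p K = -∑ i ∈ range K, p (i + 1) * log (p (i + 1))
      - (1 - ∑ i ∈ range K, p (i + 1)) * log (p K) := by
  simp only [proScore, mul_log_div _ hpK, sum_sub_distrib, ← sum_mul,
    sum_Icc_one_eq_sum_range (fun i => p i * log (p i)), sum_Icc_one_eq_sum_range p]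
  ring

lemma neg_log_le_proScore (hnn : ∀ i, 0 ≤ p i) (hs : Summable (fun i => p (i + 1)))
    (hsum : ∑' i, p (i + 1) = 1) (hsort : ∀ i j, 1 ≤ i → i ≤ j → p j ≤ p i) (hK : 1 ≤ K)
    (hpK : 0 < p K) : -log (p 1) ≤ proScore p K := by
  have hS : ∑ i ∈ range K, p (i + 1) ≤ 1 :=
    hsum ▸ hs.sum_le_tsum _ fun i _ => hnn _
  have hlog : log (p K) ≤ log (p 1) := log_le_log hpK (hsort 1 K le_rfl hK)
  have hhead : ∑ i ∈ range K, p (i + 1) * log (p (i + 1))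
      ≤ (∑ i ∈ range K, p (i + 1)) * log (p 1) :=
    sum_mul_log_le (fun i _ => hnn _) fun i _ => hsort 1 (i + 1) le_rfl (by omega)
  have hrest : (1 - ∑ i ∈ range K, p (i + 1)) * log (p K)
      ≤ (1 - ∑ i ∈ range K, p (i + 1)) * log (p 1) :=
    mul_le_mul_of_nonneg_left hlog (by linarith)
  rw [proScore_eq hpK.ne']
  linarith

lemma proScore_le_entropy (hnn : ∀ i, 0 ≤ p i) (hs : Summable (fun i => p (i + 1)))
    (hsum : ∑' i, p (i + 1) = 1) (hsort : ∀ i j, 1 ≤ i → i ≤ j → p j ≤ p i) (hK : 1 ≤ K)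
    (hpK : 0 < p K) (hHs : Summable (fun i => p (i + 1) * log (p (i + 1)))) :
    proScore p K ≤ entropy p := by
  have htail_sum : ∑' i, p (i + K + 1) = 1 - ∑ i ∈ range K, p (i + 1) := by
    rw [← hsum, ← hs.sum_add_tsum_nat_add K]; ring
  have htail : ∑' i, p (i + K + 1) * log (p (i + K + 1))
      ≤ (1 - ∑ i ∈ range K, p (i + 1)) * log (p K) :=
    htail_sum ▸ tsum_mul_log_le (fun i => hnn _) (fun i => hsort K _ hK (by omega))
      ((summable_nat_add_iff K).mpr hs) ((summable_nat_add_iff K).mpr hHs)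
  rw [proScore_eq hpK.ne', entropy, ← hHs.sum_add_tsum_nat_add K]
  linarith

end

theorem PRO_between_NLL_and_entropy_general (p : ℕ → ℝ) (K : ℕ)
    (hnn : ∀ i, 0 ≤ p i)
    (hs : Summable (fun i => p (i + 1)))
    (hsum : ∑' i, p (i + 1) = 1)
    (hsort : ∀ i j, 1 ≤ i → i ≤ j → p j ≤ p i)
    (hK : 1 ≤ K) (hpK : 0 < p K)
    (hHs : Summable (fun i => p (i + 1) * Real.log (p (i + 1)))) :
    -Real.log (p 1) ≤
        -Real.log (p K) - ∑ i ∈ Finset.Icc 1 K, p i * Real.log (p i / p K) ∧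
      -Real.log (p K) - ∑ i ∈ Finset.Icc 1 K, p i * Real.log (p i / p K) ≤
        -∑' i, p (i + 1) * Real.log (p (i + 1)) :=
  ⟨neg_log_le_proScore hnn hs hsum hsort hK hpK,
    proScore_le_entropy hnn hs hsum hsort hK hpK hHs⟩

/-- The PRO score interpolates between the NLL of the top generation and the
full predictive entropy: -log (p 1) ≤ PRO_K ≤ H(p). -/
theorem PRO_between_NLL_and_entropy (p : ℕ → ℝ) (K : ℕ)
    (hnn : ∀ i, 0 ≤ p i)
    (hs : Summable (fun i => p (i + 1)))
    (hsum : ∑' i, p (i + 1) = 1)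
    (hsort : ∀ i j, 1 ≤ i → i ≤ j → p j ≤ p i)
    (hK : 1 ≤ K) (hp1 : 0 < p 1) (hpK : 0 < p K)
    (hHs : Summable (fun i => p (i + 1) * Real.log (p (i + 1)))) :
    -Real.log (p 1) ≤
        -Real.log (p K) - ∑ i ∈ Finset.Icc 1 K, p i * Real.log (p i / p K) ∧
      -Real.log (p K) - ∑ i ∈ Finset.Icc 1 K, p i * Real.log (p i / p K) ≤
        -∑' i, p (i + 1) * Real.log (p (i + 1)) :=
  PRO_between_NLL_and_entropy_general p K hnn hs hsum hsort hK hpK hHs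
end
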